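/- Lipschitz sup-from-L¹ bound (Lemma 7): Let D ⊂ ℝ^{d+1} be a bounded domain with positive regularity constant R_D := inf_{z ∈ D, r > 0} |B(z, r) ∩ D| / min{ |D|, π^{(d+1)/2} r^{d+1} / Γ((d+1)/2 + 1) }, where B(z,r) is the closed Euclidean ball of radius r centered at z, |S| denotes the Lebesgue measure of S, and Γ is the Gamma function. Let q ∈ C⁰(D̄) be l₀-Lipschitz continuous on D̄ with l₀ > 0. Then sup_{z ∈ D} |q(z)| ≤ max{ 2‖q‖_{L¹(D̄)} / (R_D |D|), 2 l₀ · ( ‖q‖_{L¹(D̄)} · Γ((d+1)/2 + 1) / (l₀ R_D π^{(d+1)/2}) )^{1/(d+2)} }, where ‖q‖_{L¹(D̄)} = ∫_{D̄} |q(z)| dz. -/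

import Mathlib

/-!
If `|q z| = c > 0` at some `z ∈ D`, the Lipschitz bound keeps `|q| ≥ c / 2` on
`B(z, c / (2 l₀)) ∩ D`, so `‖q‖_{L¹} ≥ (c / 2) |B(z, c / (2 l₀)) ∩ D|`. The regularity constant
bounds that volume from below by `R_D` times the smaller of `|D|` and the volume of the ball;
solving for `c` in each of the two cases gives the two terms of the maximum.
-/

open Set MeasureTheory Metric
open scoped NNReal ENNReal

section LowerBound

variable {X : Type*} [PseudoMetricSpace X] {f : X → ℝ} {K : ℝ≥0} {s : Set X} {x z : X}

theorem LipschitzOnWith.half_abs_le_abs_of_dist_le (hf : LipschitzOnWith K f s) (hx : x ∈ s)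
    (hz : z ∈ s) (hxz : dist x z ≤ |f z| / (2 * K)) : |f z| / 2 ≤ |f x| := by
  have hK : (K : ℝ) * (|f z| / (2 * K)) ≤ |f z| / 2 := by
    rcases eq_or_ne (K : ℝ) 0 with hK | hK
    · simp only [hK, zero_mul]; positivity
    · exact (by field_simp : (K : ℝ) * (|f z| / (2 * K)) = |f z| / 2).le
  have hLip : |f z - f x| ≤ K * dist x z := by
    simpa only [Real.dist_eq, dist_comm z x] using hf.dist_le_mul z hz x hx
  have hdist : (K : ℝ) * dist x z ≤ K * (|f z| / (2 * K)) :=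
    mul_le_mul_of_nonneg_left hxz K.2
  linarith [abs_sub_abs_le_abs_sub (f z) (f x)]

variable [MeasurableSpace X] [OpensMeasurableSpace X] {μ : Measure X} {t : Set X}

theorem LipschitzOnWith.half_abs_mul_measureReal_le_setIntegral_abs
    (hf : LipschitzOnWith K f s) (hfs : IntegrableOn (fun x => |f x|) s μ) (hs : μ s ≠ ∞)
    (ht : MeasurableSet t) (hts : t ⊆ s) (hz : z ∈ s) :
    |f z| / 2 * μ.real (closedBall z (|f z| / (2 * K)) ∩ t) ≤ ∫ x in s, |f x| ∂μ := by
  have hBs : closedBall z (|f z| / (2 * K)) ∩ t ⊆ s := inter_subset_right.trans hts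
  calc |f z| / 2 * μ.real (closedBall z (|f z| / (2 * K)) ∩ t)
      ≤ ∫ x in closedBall z (|f z| / (2 * K)) ∩ t, |f x| ∂μ :=
        setIntegral_ge_of_const_le_real (measurableSet_closedBall.inter ht)
          (ne_top_of_le_ne_top hs (measure_mono hBs))
          (fun x hx => hf.half_abs_le_abs_of_dist_le (hBs hx) hz hx.1) (hfs.mono_set hBs)
    _ ≤ ∫ x in s, |f x| ∂μ :=
        setIntegral_mono_set hfs (.of_forall fun _ => abs_nonneg _) hBs.eventuallyLE

end LowerBound

/-- `R_D` of the paper, with `V r` the volume of a ball of radius `r`. -/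
noncomputable def regularityConstant {X : Type*} [PseudoMetricSpace X] [MeasurableSpace X]
    (μ : Measure X) (D : Set X) (V : ℝ → ℝ) : ℝ :=
  sInf {t : ℝ | ∃ z ∈ D, ∃ r : ℝ, 0 < r ∧ t = μ.real (closedBall z r ∩ D) / min (μ.real D) (V r)}

theorem regularityConstant_mul_min_le {X : Type*} [PseudoMetricSpace X] [MeasurableSpace X]
    (μ : Measure X) (D : Set X) {V : ℝ → ℝ} (hV : ∀ r, 0 < r → 0 ≤ V r) {z : X} (hz : z ∈ D)
    {r : ℝ} (hr : 0 < r) :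
    regularityConstant μ D V * min (μ.real D) (V r) ≤ μ.real (closedBall z r ∩ D) := by
  have hle : regularityConstant μ D V ≤ μ.real (closedBall z r ∩ D) / min (μ.real D) (V r) := by
    refine csInf_le ⟨0, ?_⟩ ⟨z, hz, r, hr, rfl⟩
    rintro _ ⟨z', -, r', hr', rfl⟩
    exact div_nonneg measureReal_nonneg (le_min measureReal_nonneg (hV r' hr'))
  calc regularityConstant μ D V * min (μ.real D) (V r)
      ≤ μ.real (closedBall z r ∩ D) / min (μ.real D) (V r) * min (μ.real D) (V r) :=
        mul_le_mul_of_nonneg_right hle (le_min measureReal_nonneg (hV r hr))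
    _ ≤ μ.real (closedBall z r ∩ D) := by
        rcases eq_or_ne (min (μ.real D) (V r)) 0 with h | h
        · simp only [h, mul_zero]; exact measureReal_nonneg
        · rw [div_mul_cancel₀ _ h]

theorem le_max_of_half_mul_min_le {d : ℕ} {a b K R A L c : ℝ} (ha : 0 < a) (hb : 0 < b)
    (hK : 0 < K) (hR : 0 < R) (hA : 0 < A) (hc : 0 ≤ c)
    (h : c / 2 * (R * min A (a * (c / (2 * K)) ^ (d + 1) / b)) ≤ L) :
    c ≤ max (2 * L / (R * A)) (2 * K * (L * b / (K * R * a)) ^ ((1 : ℝ) / ((d : ℝ) + 2))) := by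
  rcases min_cases A (a * (c / (2 * K)) ^ (d + 1) / b) with ⟨hmin, -⟩ | ⟨hmin, -⟩ <;>
    rw [hmin] at h
  · refine le_max_of_le_left ?_
    rw [le_div_iff₀ (by positivity)]
    linarith
  · refine le_max_of_le_right ?_
    set r := c / (2 * K) with hr
    have hr0 : 0 ≤ r := by positivity
    have hcr : c = 2 * K * r := by rw [hr]; field_simp
    have hpow : r ^ (d + 2) ≤ L * b / (K * R * a) := by
      rw [le_div_iff₀ (by positivity)]
      have : c / 2 * (R * (a * r ^ (d + 1) / b)) = K * R * a * r ^ (d + 2) / b := by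
        rw [hcr]; field_simp; ring
      rw [this, div_le_iff₀ hb] at h
      linarith
    have hroot : r ≤ (L * b / (K * R * a)) ^ ((1 : ℝ) / ((d : ℝ) + 2)) := by
      rw [one_div, Real.le_rpow_inv_iff_of_pos hr0 ((pow_nonneg hr0 _).trans hpow) (by positivity)]
      exact_mod_cast hpow
    rw [hcr]
    gcongr

theorem lipschitz_sup_from_L1_bound_general
    (d : ℕ)
    (D : Set (EuclideanSpace ℝ (Fin (d + 1))))
    (hDo : IsOpen D) (hDb : Bornology.IsBounded D)
    (R_D : ℝ)
    (hRD : R_D = sInf {t : ℝ | ∃ z ∈ D, ∃ r : ℝ, 0 < r ∧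
      t = (volume (Metric.closedBall z r ∩ D)).toReal /
            min ((volume D).toReal)
              (Real.pi ^ (((d : ℝ) + 1) / 2) * r ^ (d + 1) /
                Real.Gamma (((d : ℝ) + 1) / 2 + 1))})
    (hRDpos : 0 < R_D)
    (q : EuclideanSpace ℝ (Fin (d + 1)) → ℝ)
    (l₀ : ℝ) (hl₀ : 0 < l₀)
    (hqLip : ∀ z ∈ closure D, ∀ z' ∈ closure D, |q z - q z'| ≤ l₀ * dist z z') :
    sSup ((fun z => |q z|) '' D) ≤
      max (2 * (∫ z in closure D, |q z|) / (R_D * (volume D).toReal))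
        (2 * l₀ *
          ((∫ z in closure D, |q z|) * Real.Gamma (((d : ℝ) + 1) / 2 + 1) /
              (l₀ * R_D * Real.pi ^ (((d : ℝ) + 1) / 2))) ^ ((1 : ℝ) / ((d : ℝ) + 2))) := by
  have hLip : LipschitzOnWith ⟨l₀, hl₀.le⟩ q (closure D) :=
    .of_dist_le_mul fun z hz z' hz' => by
      rw [Real.dist_eq]; exact hqLip z hz z' hz'
  have hcpt : IsCompact (closure D) := hDb.isCompact_closure
  have hInt : IntegrableOn (fun z => |q z|) (closure D) :=
    hLip.continuousOn.abs.integrableOn_compact hcpt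
  have hL : 0 ≤ ∫ z in closure D, |q z| := integral_nonneg fun _ => abs_nonneg _
  refine Real.sSup_le ?_ (le_max_of_le_left (by positivity))
  rintro _ ⟨z, hz, rfl⟩
  rcases (abs_nonneg (q z)).eq_or_lt with h0 | hpos
  · dsimp only
    rw [← h0]
    exact le_max_of_le_left (by positivity)
  have hD : 0 < (volume D).toReal :=
    ENNReal.toReal_pos (hDo.measure_ne_zero volume ⟨z, hz⟩) hDb.measure_lt_top.ne
  refine le_max_of_half_mul_min_le (by positivity) (Real.Gamma_pos_of_pos (by positivity)) hl₀
    hRDpos hD hpos.le (le_trans (mul_le_mul_of_nonneg_left ?_ (by positivity))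
      (hLip.half_abs_mul_measureReal_le_setIntegral_abs hInt hcpt.measure_lt_top.ne
        hDo.measurableSet subset_closure (subset_closure hz)))
  rw [hRD]
  exact regularityConstant_mul_min_le volume D (fun r hr => by positivity) hz (by positivity)

/-- **Lipschitz sup-from-L¹ bound (Lemma 7)**: on a bounded domain `D ⊂ ℝ^{d+1}`
with positive regularity constant `R_D`, any `l₀`-Lipschitz continuous function `q`
on `D̄` satisfies
`sup_D |q| ≤ max{ 2‖q‖_{L¹(D̄)}/(R_D |D|),
                  2l₀ (‖q‖_{L¹(D̄)} Γ((d+1)/2+1)/(l₀ R_D π^{(d+1)/2}))^{1/(d+2)} }`. -/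
theorem lipschitz_sup_from_L1_bound
    (d : ℕ)
    (D : Set (EuclideanSpace ℝ (Fin (d + 1))))
    (hDo : IsOpen D) (hDne : D.Nonempty) (hDb : Bornology.IsBounded D)
    (R_D : ℝ)
    (hRD : R_D = sInf {t : ℝ | ∃ z ∈ D, ∃ r : ℝ, 0 < r ∧
      t = (volume (Metric.closedBall z r ∩ D)).toReal /
            min ((volume D).toReal)
              (Real.pi ^ (((d : ℝ) + 1) / 2) * r ^ (d + 1) /
                Real.Gamma (((d : ℝ) + 1) / 2 + 1))})
    (hRDpos : 0 < R_D)
    (q : EuclideanSpace ℝ (Fin (d + 1)) → ℝ)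
    (hq0 : ContinuousOn q (closure D))
    (l₀ : ℝ) (hl₀ : 0 < l₀)
    (hqLip : ∀ z ∈ closure D, ∀ z' ∈ closure D, |q z - q z'| ≤ l₀ * dist z z') :
    sSup ((fun z => |q z|) '' D) ≤
      max (2 * (∫ z in closure D, |q z|) / (R_D * (volume D).toReal))
        (2 * l₀ *
          ((∫ z in closure D, |q z|) * Real.Gamma (((d : ℝ) + 1) / 2 + 1) /
              (l₀ * R_D * Real.pi ^ (((d : ℝ) + 1) / 2))) ^ ((1 : ℝ) / ((d : ℝ) + 2))) :=
  lipschitz_sup_from_L1_bound_general d D hDo hDb R_D hRD hRDpos q l₀ hl₀ hqLip
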